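/- Let W be a finite group, X a finitely generated free ℤ-module with a W-action, γ ∈ W a fixed element, and M = ℤ_ℓ[W] ⊗_ℤ X with the two commuting actions described in the context. Let W act on Hom_{ℤ_ℓ}(M, ℤ_ℓ) by (w·φ)(m) = φ(w⁻¹·m). Then the assignment φ ↦ (x ↦ φ(1 ⊗ x)) defines a ℤ_ℓ-linear isomorphism from the module of W-invariant functionals φ ∈ Hom_{ℤ_ℓ}(M, ℤ_ℓ) that vanish on (1−γ∘)M onto the module of functionals in Hom_{ℤ_ℓ}(X_ℓ, ℤ_ℓ) that vanish on (1−γ)X_ℓ; that is, Hom_{ℤ_ℓ}(X_ℓ/(1−γ)X_ℓ, ℤ_ℓ) ≅ (Hom_{ℤ_ℓ}(M/(1−γ∘)M, ℤ_ℓ))^W. -/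

import Mathlib

/-!
Statement 1.  With `M = ℤ_ℓ[W] ⊗_ℤ X` carrying the two commuting actions
`w·(a ⊗ x) = (a w⁻¹) ⊗ (w·x)` and `γ∘(a ⊗ x) = (γa) ⊗ x`, and with `W` acting on
`Hom_{ℤ_ℓ}(M, ℤ_ℓ)` by `(w·φ)(m) = φ(w⁻¹·m)`, the assignment `φ ↦ (x ↦ φ(1 ⊗ x))`
is a `ℤ_ℓ`-linear isomorphism from the module of `W`-invariant functionals on `M`
vanishing on `(1−γ∘)M` onto the module of functionals on `X_ℓ` vanishing on `(1−γ)X_ℓ`.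
-/

open TensorProduct

namespace Stmt1

noncomputable section

variable (ℓ : ℕ) [Fact ℓ.Prime]
variable (W : Type*) [Group W] [Fintype W]
variable (X : Type*) [AddCommGroup X] [DistribMulAction W X]

/-- The action of `w : W` on `X`, as a `ℤ`-linear map. -/
def actX (w : W) : X →ₗ[ℤ] X :=
  (DistribMulAction.toAddMonoidHom X w).toIntLinearMap

/-- `M = ℤ_ℓ[W] ⊗_ℤ X`. -/
abbrev Mmod := MonoidAlgebra ℤ_[ℓ] W ⊗[ℤ] X

/-- `X_ℓ = ℤ_ℓ ⊗_ℤ X`. -/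
abbrev Xl := ℤ_[ℓ] ⊗[ℤ] X

/-- The action `γ∘` on `M`: `γ∘(a ⊗ x) = (γa) ⊗ x`. -/
def gammaAct (γ : W) : Mmod ℓ W X →ₗ[ℤ_[ℓ]] Mmod ℓ W X :=
  AlgebraTensorModule.map
    (LinearMap.mulLeft ℤ_[ℓ] (MonoidAlgebra.of ℤ_[ℓ] W γ)) (LinearMap.id : X →ₗ[ℤ] X)

/-- The `W`-action on `M`: `w·(a ⊗ x) = (a w⁻¹) ⊗ (w·x)`. -/
def wAct (w : W) : Mmod ℓ W X →ₗ[ℤ_[ℓ]] Mmod ℓ W X :=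
  AlgebraTensorModule.map
    (LinearMap.mulRight ℤ_[ℓ] (MonoidAlgebra.of ℤ_[ℓ] W w⁻¹)) (actX W X w)

/-- The action of `γ : W` on `X_ℓ = ℤ_ℓ ⊗_ℤ X`, base-changed from `X`. -/
def actXl (γ : W) : Xl ℓ X →ₗ[ℤ_[ℓ]] Xl ℓ X :=
  LinearMap.baseChange ℤ_[ℓ] (actX W X γ)

/-- The `ℤ_ℓ`-linear map `X_ℓ → M`, `x ↦ 1 ⊗ x` (on pure tensors `c ⊗ y ↦ (c·1) ⊗ y`). -/
def unitMap : Xl ℓ X →ₗ[ℤ_[ℓ]] Mmod ℓ W X :=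
  AlgebraTensorModule.map
    (LinearMap.toSpanSingleton ℤ_[ℓ] (MonoidAlgebra ℤ_[ℓ] W) 1)
    (LinearMap.id : X →ₗ[ℤ] X)

/-- The `ℤ_ℓ`-submodule of `Hom_{ℤ_ℓ}(M, ℤ_ℓ)` of `W`-invariant functionals (for the action
`(w·φ)(m) = φ(w⁻¹·m)`) that vanish on `(1−γ∘)M`; equivalently,
`Hom_{ℤ_ℓ}(M/(1−γ∘)M, ℤ_ℓ)^W`. -/
def S1 (γ : W) : Submodule ℤ_[ℓ] (Mmod ℓ W X →ₗ[ℤ_[ℓ]] ℤ_[ℓ]) where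
  carrier := {φ | (∀ (w : W) (m : Mmod ℓ W X), φ (wAct ℓ W X w m) = φ m) ∧
      (∀ m : Mmod ℓ W X, φ (m - gammaAct ℓ W X γ m) = 0)}
  add_mem' := by
    rintro φ ψ ⟨h1, h2⟩ ⟨h3, h4⟩
    exact ⟨fun w m => by simp [h1 w m, h3 w m], fun m => by simp [h2 m, h4 m]⟩
  zero_mem' := ⟨fun _ _ => rfl, fun _ => rfl⟩
  smul_mem' := by
    rintro c φ ⟨h1, h2⟩
    exact ⟨fun w m => by simp [h1 w m], fun m => by simp [h2 m]⟩

/-- The `ℤ_ℓ`-submodule of `Hom_{ℤ_ℓ}(X_ℓ, ℤ_ℓ)` of functionals vanishing on `(1−γ)X_ℓ`;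
equivalently, `Hom_{ℤ_ℓ}(X_ℓ/(1−γ)X_ℓ, ℤ_ℓ)`. -/
def S2 (γ : W) : Submodule ℤ_[ℓ] (Xl ℓ X →ₗ[ℤ_[ℓ]] ℤ_[ℓ]) where
  carrier := {ψ | ∀ x : Xl ℓ X, ψ (x - actXl ℓ W X γ x) = 0}
  add_mem' := by
    intro ψ₁ ψ₂ h1 h2 x
    simp [h1 x, h2 x]
  zero_mem' := fun _ => rfl
  smul_mem' := by
    intro c ψ h x
    simp [h x]

end

/-!
The inverse of restriction along `x ↦ 1 ⊗ x` is composition with the action map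
`θ : M → X_ℓ`, `δ_w ⊗ x ↦ 1 ⊗ w•x`. It is `W`-invariant, turns `γ∘` into `γ`, and is a
retraction of `x ↦ 1 ⊗ x`. Conversely a `W`-invariant functional `φ` factors through `θ`, since
`1 ⊗ w•x = w·(δ_w ⊗ x)`; and `φ(1 ⊗ γx) = φ(γ∘(γ·(1 ⊗ x)))` shows that restriction carries the
`γ∘`-coinvariance of `φ` to `γ`-coinvariance.
-/

noncomputable section

variable {ℓ : ℕ} [Fact ℓ.Prime] {W : Type*} [Group W] {X : Type*} [AddCommGroup X]

variable (ℓ W X) in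
theorem Mmod.hom_ext {N : Type*} [AddCommGroup N] [Module ℤ_[ℓ] N]
    {f g : Mmod ℓ W X →ₗ[ℤ_[ℓ]] N}
    (h : ∀ w x, f (MonoidAlgebra.of ℤ_[ℓ] W w ⊗ₜ x) = g (MonoidAlgebra.of ℤ_[ℓ] W w ⊗ₜ x)) :
    f = g := by
  ext w x
  simpa using h w x

variable [DistribMulAction W X]

@[simp] theorem actX_apply (w : W) (x : X) : actX W X w x = w • x := rfl

variable (ℓ W X) in
def repXl : Representation ℤ_[ℓ] W (Xl ℓ X) :=
  (Module.End.baseChangeHom ℤ ℤ_[ℓ] X).toMonoidHom.comp (Representation.ofDistribMulAction ℤ W X)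

theorem actXl_eq_repXl (w : W) : actXl ℓ W X w = repXl ℓ W X w := rfl

@[simp] theorem repXl_apply_tmul (w : W) (c : ℤ_[ℓ]) (x : X) :
    repXl ℓ W X w (c ⊗ₜ x) = c ⊗ₜ (w • x) := rfl

variable (ℓ W X) in
/-- `θ`: under `M ≅ ℤ_ℓ[W] ⊗_{ℤ_ℓ} X_ℓ`, the structure map of the `ℤ_ℓ[W]`-module `X_ℓ`. -/
def theta : Mmod ℓ W X →ₗ[ℤ_[ℓ]] Xl ℓ X :=
  TensorProduct.lift (repXl ℓ W X).asAlgebraHom.toLinearMap ∘ₗ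
    (AlgebraTensorModule.cancelBaseChange ℤ ℤ_[ℓ] ℤ_[ℓ] (MonoidAlgebra ℤ_[ℓ] W) X).symm.toLinearMap

@[simp] theorem theta_tmul (a : MonoidAlgebra ℤ_[ℓ] W) (x : X) :
    theta ℓ W X (a ⊗ₜ x) = (repXl ℓ W X).asAlgebraHom a (1 ⊗ₜ x) := rfl

theorem theta_comp_wAct (w : W) : theta ℓ W X ∘ₗ wAct ℓ W X w = theta ℓ W X := by
  ext v x
  simp [wAct]

theorem theta_comp_gammaAct (γ : W) :
    theta ℓ W X ∘ₗ gammaAct ℓ W X γ = actXl ℓ W X γ ∘ₗ theta ℓ W X := by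
  ext v x
  simp [gammaAct, actXl_eq_repXl]

theorem theta_comp_unitMap : theta ℓ W X ∘ₗ unitMap ℓ W X = LinearMap.id := by
  ext x
  simp [unitMap]

theorem unitMap_comp_actXl (γ : W) :
    unitMap ℓ W X ∘ₗ actXl ℓ W X γ = gammaAct ℓ W X γ ∘ₗ wAct ℓ W X γ ∘ₗ unitMap ℓ W X := by
  ext x
  simp [unitMap, actXl_eq_repXl, gammaAct, wAct, MonoidAlgebra.one_def]

theorem unitMap_theta_of_tmul (w : W) (x : X) :
    unitMap ℓ W X (theta ℓ W X (MonoidAlgebra.of ℤ_[ℓ] W w ⊗ₜ x)) =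
      wAct ℓ W X w (MonoidAlgebra.of ℤ_[ℓ] W w ⊗ₜ x) := by
  simp [unitMap, wAct, MonoidAlgebra.one_def]

theorem comp_unitMap_comp_theta {N : Type*} [AddCommGroup N] [Module ℤ_[ℓ] N]
    {φ : Mmod ℓ W X →ₗ[ℤ_[ℓ]] N} (hφ : ∀ w m, φ (wAct ℓ W X w m) = φ m) :
    φ ∘ₗ unitMap ℓ W X ∘ₗ theta ℓ W X = φ :=
  Mmod.hom_ext ℓ W X fun w x => by
    rw [LinearMap.comp_apply, LinearMap.comp_apply, unitMap_theta_of_tmul, hφ]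

theorem comp_unitMap_mem_S2 {γ : W} {φ : Mmod ℓ W X →ₗ[ℤ_[ℓ]] ℤ_[ℓ]} (hφ : φ ∈ S1 ℓ W X γ) :
    φ ∘ₗ unitMap ℓ W X ∈ S2 ℓ W X γ := by
  obtain ⟨hinv, hvan⟩ := hφ
  have hγ (m : Mmod ℓ W X) : φ (gammaAct ℓ W X γ m) = φ m := by
    rw [eq_comm, ← sub_eq_zero, ← map_sub, hvan]
  intro x
  simp [← LinearMap.comp_apply (unitMap ℓ W X), unitMap_comp_actXl, hγ, hinv]

theorem comp_theta_mem_S1 {γ : W} {ψ : Xl ℓ X →ₗ[ℤ_[ℓ]] ℤ_[ℓ]} (hψ : ψ ∈ S2 ℓ W X γ) :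
    ψ ∘ₗ theta ℓ W X ∈ S1 ℓ W X γ := by
  refine ⟨fun w m => ?_, fun m => ?_⟩
  · rw [LinearMap.comp_apply, ← LinearMap.comp_apply (theta ℓ W X), theta_comp_wAct,
      LinearMap.comp_apply]
  · simpa [← LinearMap.comp_apply (theta ℓ W X), theta_comp_gammaAct] using hψ (theta ℓ W X m)

variable (ℓ W X) in
def restrictionEquiv (γ : W) : S1 ℓ W X γ ≃ₗ[ℤ_[ℓ]] S2 ℓ W X γ :=
  LinearEquiv.ofLinearMap
    ((LinearMap.lcomp ℤ_[ℓ] ℤ_[ℓ] (unitMap ℓ W X)).restrict fun _ => comp_unitMap_mem_S2)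
    ((LinearMap.lcomp ℤ_[ℓ] ℤ_[ℓ] (theta ℓ W X)).restrict fun _ => comp_theta_mem_S1)
    (LinearMap.ext fun ψ => Subtype.ext <| by
      change ((ψ : Xl ℓ X →ₗ[ℤ_[ℓ]] ℤ_[ℓ]) ∘ₗ theta ℓ W X) ∘ₗ unitMap ℓ W X = ψ
      rw [LinearMap.comp_assoc, theta_comp_unitMap, LinearMap.comp_id])
    (LinearMap.ext fun φ => Subtype.ext (comp_unitMap_comp_theta φ.2.1))

end

noncomputable section

variable (ℓ : ℕ) [Fact ℓ.Prime]
variable (W : Type*) [Group W] [Fintype W]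
variable (X : Type*) [AddCommGroup X] [DistribMulAction W X]

theorem restriction_equiv (γ : W) :
    ∃ e : S1 ℓ W X γ ≃ₗ[ℤ_[ℓ]] S2 ℓ W X γ,
      ∀ (φ : S1 ℓ W X γ) (x : Xl ℓ X),
        (e φ : Xl ℓ X →ₗ[ℤ_[ℓ]] ℤ_[ℓ]) x =
          (φ : Mmod ℓ W X →ₗ[ℤ_[ℓ]] ℤ_[ℓ]) (unitMap ℓ W X x) :=
  ⟨restrictionEquiv ℓ W X γ, fun _ _ => rfl⟩

end

end Stmt1
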